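/- Let m < n be positive integers with n ≠ m + gcd(m,n), let K be an infinite field, and let T = (T_{ijk}), 1 ≤ i ≤ m, 1 ≤ j ≤ n, k ∈ {1,2}, be a 3-tensor of independent indeterminates with X = (T_{ij1}), Y = (T_{ij2}). Then K[T]^{SL(m,K)×SL(n,K)} = K, i.e., the only invariant polynomials under the action (P,Q)·X = PᵀXQ, (P,Q)·Y = PᵀYQ are the constants. -/

import Mathlib

open MvPolynomial

/-- The K-algebra endomorphism of K[T] induced by (P,Q): X ↦ PᵀXQ, Y ↦ PᵀYQ,
i.e. the variable T_{ijk} is sent to Σ_{a,b} P_{ai} Q_{bj} T_{abk}. -/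
noncomputable def slPairAction (K : Type*) [CommSemiring K] (m n : ℕ)
    (P : Matrix (Fin m) (Fin m) K) (Q : Matrix (Fin n) (Fin n) K) :
    MvPolynomial (Fin m × Fin n × Fin 2) K →ₐ[K] MvPolynomial (Fin m × Fin n × Fin 2) K :=
  MvPolynomial.aeval fun v =>
    ∑ a : Fin m, ∑ b : Fin n,
      MvPolynomial.C (P a v.1 * Q b v.2.1) * MvPolynomial.X (a, b, v.2.2)

/-
Every point `(X, Y)` lies in the null cone: a one-parameter subgroup
`τ ↦ (R·diag(τ^a), Q·diag(τ^b))` of `SL(m) × SL(n)` drives it to `0` as `τ → 0`, so an invariant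
takes the same value at `(X, Y)` as at `0`. Such a subgroup exists as soon as there are subspaces
`T ⊆ Kⁿ`, `U ⊆ Kᵐ` with `XT + YT ⊆ U` and `n·dim U < m·dim T`: choose `Q` with `dim T` columns
in `T` and `R` with `m - dim U` columns in `U^⊥`, and give exactly that block of entries of
`RᵀXQ`, `RᵀYQ` a nonpositive weight `aᵢ + bⱼ`.
For `d = ⌊m/(n-m)⌋`, counting dimensions gives a nonzero polynomial `v(λ)` of degree `≤ d` with
`(X + λY)v(λ) = 0`. Its coefficients span a `T` with `XT + YT = XT`, and `X` kills the lowest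
nonzero coefficient, so `dim XT < dim T ≤ d + 1`. Finally `n ≠ m + gcd(m,n)` says exactly that
`n - m ∤ m`, i.e. `d(n-m) < m`, which gives `n·dim XT < m·dim T`.
-/
open Matrix Module Finset

theorem MvPolynomial.eval_zero_eq_of_forall_eval_pow_mul {K σ : Type*} [Field K] [Infinite K]
    (f : MvPolynomial σ K) (M : σ → K) (w : σ → ℕ) (hw : ∀ v, M v ≠ 0 → w v ≠ 0)
    (h : ∀ τ : K, τ ≠ 0 → eval (fun v => τ ^ w v * M v) f = eval M f) :
    eval 0 f = eval M f := by
  set g : Polynomial K := aeval (fun v => Polynomial.X ^ w v * Polynomial.C (M v)) f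
  have hg : ∀ τ, g.eval τ = eval (fun v => τ ^ w v * M v) f := fun τ => by
    rw [← Polynomial.coe_aeval_eq_eval, ← AlgHom.comp_apply, comp_aeval, ← coe_aeval_eq_eval]
    simp only [map_mul, map_pow, Polynomial.aeval_X, Polynomial.aeval_C, Algebra.algebraMap_self,
      RingHom.id_apply]
    rfl
  have hconst : g = Polynomial.C (eval M f) := by
    refine Polynomial.eq_of_infinite_eval_eq _ _ (Set.infinite_of_finite_compl ?_)
    refine (Set.finite_singleton (0 : K)).subset fun τ hτ => ?_
    by_contra hτ0
    exact hτ (by simpa [hg] using h τ hτ0)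
  have h0 : (fun v => (0 : K) ^ w v * M v) = 0 := _root_.funext fun v => by
    by_cases hv : M v = 0 <;> simp [hv, hw]
  simpa [hg, h0] using congr_arg (Polynomial.eval 0) hconst

theorem prod_zpow_eq_zpow_sum {ι G₀ : Type*} [CommGroupWithZero G₀] {x : G₀} (hx : x ≠ 0)
    (s : Finset ι) (a : ι → ℤ) : ∏ i ∈ s, x ^ a i = x ^ ∑ i ∈ s, a i := by
  classical
  induction s using Finset.induction_on with
  | empty => simp
  | insert i s hi ih => rw [prod_insert hi, sum_insert hi, ih, zpow_add₀ hx]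

theorem exists_balanced_weights {ι κ : Type*} [Fintype ι] [Fintype κ] (I : Finset ι) (J : Finset κ)
    (h : Fintype.card ι * Fintype.card κ < Fintype.card κ * #I + Fintype.card ι * #J) :
    ∃ (a : ι → ℤ) (b : κ → ℤ), ∑ i, a i = 0 ∧ ∑ j, b j = 0 ∧
      ∀ i j, 0 < a i + b j ∨ (i ∈ I ∧ j ∈ J) := by
  classical
  set m := Fintype.card ι
  set n := Fintype.card κ
  have h' : (m * n : ℤ) < n * #I + m * #J := by exact_mod_cast h
  refine ⟨fun i => n * #I - if i ∈ I then m * n else 0,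
    fun j => m * #J - if j ∈ J then m * n else 0, ?_, ?_, fun i j => ?_⟩
  · simp [sum_sub_distrib, m]; ring
  · simp [sum_sub_distrib, n]; ring
  · by_cases hi : i ∈ I <;> by_cases hj : j ∈ J
    · exact Or.inr ⟨hi, hj⟩
    all_goals
      left
      have : (0 : ℤ) ≤ m * n := by positivity
      simp only [hi, hj, if_true, if_false]
      push_cast
      linarith

theorem Matrix.exists_det_eq_one_forall_col_mem {K ι : Type*} [Field K] [Fintype ι]
    [DecidableEq ι] (W : Submodule K (ι → K)) :
    ∃ G : Matrix ι ι K, G.det = 1 ∧ ∃ I : Finset ι, #I = finrank K W ∧ ∀ j ∈ I, Gᵀ j ∈ W := by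
  rcases isEmpty_or_nonempty ι with hι | ⟨⟨j₀⟩⟩
  · exact ⟨1, det_one, ∅, by simp [finrank_zero_of_subsingleton], by simp⟩
  obtain ⟨W', hW⟩ := W.exists_isCompl
  let b := ((finBasis K W).prod (finBasis K W')).map (Submodule.prodEquivOfIsCompl W W' hW)
  let e := b.indexEquiv (Pi.basisFun K ι)
  let G₀ := (Pi.basisFun K ι).toMatrix (b.reindex e)
  have hcol : ∀ l, G₀ᵀ (e (Sum.inl l)) = finBasis K W l := fun l => by
    ext i; simp [G₀, Basis.toMatrix_apply, b]
  have hdet : G₀.det ≠ 0 := by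
    rw [← Basis.det_apply]; exact ((Pi.basisFun K ι).isUnit_det _).ne_zero
  let D : Matrix ι ι K := diagonal (Function.update 1 j₀ G₀.det⁻¹)
  refine ⟨G₀ * D, ?_, univ.map (Function.Embedding.inl.trans e.toEmbedding), by simp, ?_⟩
  · rw [det_mul, det_diagonal, prod_update_of_mem (mem_univ _)]
    simp [hdet]
  · simp only [mem_map, mem_univ, true_and, Function.Embedding.trans_apply,
      Function.Embedding.inl_apply, Equiv.coe_toEmbedding]
    rintro _ ⟨l, rfl⟩
    have : (G₀ * D)ᵀ (e (Sum.inl l)) = D (e (Sum.inl l)) (e (Sum.inl l)) • G₀ᵀ (e (Sum.inl l)) := by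
      ext i; simp [D, mul_diagonal, mul_comm]
    rw [this, hcol]
    exact W.smul_mem _ (finBasis K W l).2

theorem Matrix.transpose_mul_mul_apply {R : Type*} [CommSemiring R] {ι ι' κ κ' : Type*}
    [Fintype ι] [Fintype κ] (A : Matrix ι ι' R) (B : Matrix ι κ R) (C : Matrix κ κ' R)
    (i : ι') (j : κ') :
    (Aᵀ * B * C) i j = Aᵀ i ⬝ᵥ B *ᵥ Cᵀ j := by
  simp only [mul_apply, dotProduct, mulVec, transpose_apply, sum_mul, mul_sum]
  rw [sum_comm]
  exact sum_congr rfl fun _ _ => sum_congr rfl fun _ _ => by ring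

theorem exists_degree_bounds {m n : ℕ} (hmn : m < n) (hne : n ≠ m + m.gcd n) :
    ∃ d, m * (d + 2) < n * (d + 1) ∧ n * d < m * (d + 1) := by
  obtain ⟨q, rfl⟩ : ∃ q, n = m + q := ⟨n - m, by omega⟩
  have hq : 0 < q := by omega
  have hndvd : ¬ q ∣ m := fun hqm => hne <| by
    rw [Nat.gcd_self_add_right, Nat.gcd_eq_right hqm]
  have hr := Nat.pos_of_ne_zero (mt Nat.dvd_of_mod_eq_zero hndvd)
  have hdiv := Nat.div_add_mod m q
  have hlt := Nat.mod_lt m hq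
  refine ⟨m / q, ?_, ?_⟩ <;> nlinarith

section

variable {K : Type*} [Field K] {m n : ℕ}

/-- `v` is the coefficient sequence of a polynomial solution `v(λ) = ∑ vᵢ λⁱ` of degree `≤ d`
of `(X + λY) v(λ) = 0`. -/
def IsKroneckerChain {d : ℕ} (X Y : Matrix (Fin m) (Fin n) K) (v : Fin (d + 1) → Fin n → K) :
    Prop :=
  X *ᵥ v 0 = 0 ∧ (∀ i : Fin d, X *ᵥ v i.succ + Y *ᵥ v i.castSucc = 0) ∧
    Y *ᵥ v (Fin.last d) = 0

theorem exists_isKroneckerChain {d : ℕ} (X Y : Matrix (Fin m) (Fin n) K)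
    (h : m * (d + 2) < n * (d + 1)) :
    ∃ v : Fin (d + 1) → Fin n → K, v ≠ 0 ∧ IsKroneckerChain X Y v := by
  let Φ : (Fin (d + 1) → Fin n → K) →ₗ[K] (Fin m → K) × (Fin d → Fin m → K) × (Fin m → K) :=
    (X.mulVecLin ∘ₗ LinearMap.proj 0).prod <|
      (LinearMap.pi fun i : Fin d =>
        X.mulVecLin ∘ₗ LinearMap.proj i.succ + Y.mulVecLin ∘ₗ LinearMap.proj i.castSucc).prod
      (Y.mulVecLin ∘ₗ LinearMap.proj (Fin.last d))
  have hker : LinearMap.ker Φ ≠ ⊥ := LinearMap.ker_ne_bot_of_finrank_lt <| by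
    simp only [finrank_prod, finrank_pi_fintype, finrank_self, sum_const, card_univ,
      Fintype.card_fin, smul_eq_mul]
    nlinarith
  obtain ⟨v, hv, hv0⟩ := Submodule.exists_mem_ne_zero_of_ne_bot hker
  refine ⟨v, hv0, ?_⟩
  simpa [Φ, IsKroneckerChain, Prod.ext_iff, funext_iff] using hv

namespace IsKroneckerChain

variable {d : ℕ} {X Y : Matrix (Fin m) (Fin n) K} {v : Fin (d + 1) → Fin n → K}

theorem map_le (hv : IsKroneckerChain X Y v) :
    (Submodule.span K (Set.range v)).map Y.mulVecLin ≤
      (Submodule.span K (Set.range v)).map X.mulVecLin := by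
  rw [Submodule.map_le_iff_le_comap, Submodule.span_le]
  rintro _ ⟨i, rfl⟩
  induction i using Fin.lastCases with
  | last =>
    simp only [SetLike.mem_coe, Submodule.mem_comap, mulVecLin_apply, hv.2.2]
    exact zero_mem _
  | cast i =>
    refine ⟨-v i.succ, neg_mem (Submodule.subset_span ⟨_, rfl⟩), ?_⟩
    simp [mulVec_neg, eq_neg_of_add_eq_zero_right (hv.2.1 i)]

theorem exists_mem_span_ne_zero_mulVec_eq_zero (hv : IsKroneckerChain X Y v) (hv0 : v ≠ 0) :
    ∃ z ∈ Submodule.span K (Set.range v), z ≠ 0 ∧ X *ᵥ z = 0 := by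
  -- if `X` were injective on the span, the chain relations would force `v₀ = v₁ = ⋯ = 0`
  by_contra! hinj
  refine hv0 (funext fun i => ?_)
  induction i using Fin.induction with
  | zero => exact by_contra fun h => hinj _ (Submodule.subset_span ⟨0, rfl⟩) h hv.1
  | succ i ih =>
    refine by_contra fun h => hinj _ (Submodule.subset_span ⟨_, rfl⟩) h ?_
    simpa [ih] using hv.2.1 i

theorem finrank_map_lt (hv : IsKroneckerChain X Y v) (hv0 : v ≠ 0) :
    finrank K ((Submodule.span K (Set.range v)).map X.mulVecLin) <
      finrank K (Submodule.span K (Set.range v)) := by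
  set T := Submodule.span K (Set.range v)
  obtain ⟨z, hzT, hz0, hXz⟩ := hv.exists_mem_span_ne_zero_mulVec_eq_zero hv0
  have hker : LinearMap.ker (X.mulVecLin.domRestrict T) ≠ ⊥ :=
    (Submodule.ne_bot_iff _).2 ⟨⟨z, hzT⟩, by simpa using hXz, by simpa using hz0⟩
  have := Submodule.finrank_eq_zero.not.2 hker
  have := LinearMap.finrank_range_add_finrank_ker (X.mulVecLin.domRestrict T)
  rw [LinearMap.range_domRestrict] at this
  omega

end IsKroneckerChain

theorem exists_subspace_finrank_lt {d : ℕ} (h₁ : m * (d + 2) < n * (d + 1))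
    (h₂ : n * d < m * (d + 1)) (X Y : Matrix (Fin m) (Fin n) K) :
    ∃ (T : Submodule K (Fin n → K)) (U : Submodule K (Fin m → K)),
      T.map X.mulVecLin ≤ U ∧ T.map Y.mulVecLin ≤ U ∧ n * finrank K U < m * finrank K T := by
  obtain ⟨v, hv0, hv⟩ := exists_isKroneckerChain X Y h₁
  refine ⟨_, _, le_rfl, hv.map_le, ?_⟩
  have hlt := hv.finrank_map_lt hv0
  have hle : finrank K (Submodule.span K (Set.range v)) ≤ d + 1 :=
    (finrank_range_le_card v).trans_eq (Fintype.card_fin _)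
  generalize finrank K (Submodule.span K (Set.range v)) = t at hlt hle
  generalize finrank K ((Submodule.span K (Set.range v)).map X.mulVecLin) = u at hlt
  obtain ⟨s, rfl⟩ : ∃ s, t = s + 1 := ⟨t - 1, by omega⟩
  have hus : n * u ≤ n * s := Nat.mul_le_mul_left n (Nat.lt_succ_iff.1 hlt)
  have : n * s * (d + 1) < m * (s + 1) * (d + 1) := by nlinarith
  nlinarith

def IsSLPairInvariant (f : MvPolynomial (Fin m × Fin n × Fin 2) K) : Prop :=
  ∀ (P : Matrix (Fin m) (Fin m) K) (Q : Matrix (Fin n) (Fin n) K),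
    P.det = 1 → Q.det = 1 → slPairAction K m n P Q f = f

def pencilPoint (Z : Fin 2 → Matrix (Fin m) (Fin n) K) : Fin m × Fin n × Fin 2 → K :=
  fun v => Z v.2.2 v.1 v.2.1

theorem eval_slPairAction (P : Matrix (Fin m) (Fin m) K) (Q : Matrix (Fin n) (Fin n) K)
    (Z : Fin 2 → Matrix (Fin m) (Fin n) K) (f : MvPolynomial (Fin m × Fin n × Fin 2) K) :
    eval (pencilPoint Z) (slPairAction K m n P Q f) =
      eval (pencilPoint fun k => Pᵀ * Z k * Q) f := by
  simp only [slPairAction, ← coe_aeval_eq_eval, AlgHom.coe_toRingHom]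
  rw [← AlgHom.comp_apply, comp_aeval]
  congr 2
  ext ⟨i, j, k⟩
  simp only [map_sum, map_mul, aeval_C, aeval_X, pencilPoint, mul_apply, transpose_apply,
    Algebra.algebraMap_self, RingHom.id_apply, sum_mul]
  rw [sum_comm]
  exact sum_congr rfl fun _ _ => sum_congr rfl fun _ _ => by ring

theorem IsSLPairInvariant.eval_eq {f : MvPolynomial (Fin m × Fin n × Fin 2) K}
    (hf : IsSLPairInvariant f) (Z : Fin 2 → Matrix (Fin m) (Fin n) K)
    {P : Matrix (Fin m) (Fin m) K} {Q : Matrix (Fin n) (Fin n) K}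
    (hP : P.det = 1) (hQ : Q.det = 1) :
    eval (pencilPoint fun k => Pᵀ * Z k * Q) f = eval (pencilPoint Z) f := by
  rw [← eval_slPairAction, hf P Q hP hQ]

theorem IsSLPairInvariant.eval_eq_eval_zero_of_weights [Infinite K]
    {f : MvPolynomial (Fin m × Fin n × Fin 2) K} (hf : IsSLPairInvariant f)
    (Z : Fin 2 → Matrix (Fin m) (Fin n) K) (a : Fin m → ℤ) (b : Fin n → ℤ)
    (ha : ∑ i, a i = 0) (hb : ∑ j, b j = 0) (hZ : ∀ k i j, Z k i j ≠ 0 → 0 < a i + b j) :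
    eval (pencilPoint Z) f = eval 0 f := by
  refine (eval_zero_eq_of_forall_eval_pow_mul f _ (fun v => (a v.1 + b v.2.1).toNat)
    (fun v hv => by have := hZ _ _ _ hv; omega) fun τ hτ => ?_).symm
  have hdet : ∀ {ι : Type} [Fintype ι] [DecidableEq ι] (c : ι → ℤ), ∑ i, c i = 0 →
      (diagonal fun i => τ ^ c i).det = 1 := fun c hc => by
    rw [det_diagonal, prod_zpow_eq_zpow_sum hτ, hc, zpow_zero]
  rw [← hf.eval_eq Z (hdet a ha) (hdet b hb)]
  congr 2
  funext ⟨i, j, k⟩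
  simp only [pencilPoint, diagonal_transpose, diagonal_mul, mul_diagonal]
  by_cases hz : Z k i j = 0
  · simp [hz]
  · have hw : ((a i + b j).toNat : ℤ) = a i + b j := Int.toNat_of_nonneg (hZ k i j hz).le
    rw [← zpow_natCast, hw, zpow_add₀ hτ]
    ring

theorem IsSLPairInvariant.eval_eq_eval_zero_of_subspace [Infinite K]
    {f : MvPolynomial (Fin m × Fin n × Fin 2) K} (hf : IsSLPairInvariant f)
    (Z : Fin 2 → Matrix (Fin m) (Fin n) K) (T : Submodule K (Fin n → K))
    (U : Submodule K (Fin m → K)) (hTU : ∀ k, T.map (Z k).mulVecLin ≤ U)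
    (hdim : n * finrank K U < m * finrank K T) :
    eval (pencilPoint Z) f = eval 0 f := by
  let S := U.dualAnnihilator.map (dotProductEquiv K (Fin m)).symm.toLinearMap
  have hS : ∀ u ∈ S, ∀ w ∈ U, u ⬝ᵥ w = 0 := fun u hu => by
    simpa using (Submodule.mem_dualAnnihilator _).1 ((Submodule.mem_map_equiv _).1 hu)
  have hSU : finrank K S + finrank K U = m := by
    rw [LinearEquiv.finrank_map_eq, add_comm, Subspace.finrank_add_finrank_dualAnnihilator_eq,
      finrank_fin_fun]
  obtain ⟨R, hR, I, hI, hRI⟩ := exists_det_eq_one_forall_col_mem S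
  obtain ⟨Q, hQ, J, hJ, hQJ⟩ := exists_det_eq_one_forall_col_mem T
  obtain ⟨a, b, ha, hb, hab⟩ := exists_balanced_weights I J (by
    simp only [Fintype.card_fin, hI, hJ]
    nlinarith)
  rw [← hf.eval_eq Z hR hQ]
  refine hf.eval_eq_eval_zero_of_weights _ a b ha hb fun k i j hk => ?_
  refine (hab i j).resolve_right fun ⟨hi, hj⟩ => hk ?_
  rw [transpose_mul_mul_apply]
  exact hS _ (hRI i hi) _ (hTU k ⟨_, hQJ j hj, rfl⟩)

end

theorem invariants_trivial (K : Type*) [Field K] [Infinite K] (m n : ℕ)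
    (hmn : m < n) (hne : n ≠ m + Nat.gcd m n) :
    {f : MvPolynomial (Fin m × Fin n × Fin 2) K |
        ∀ (P : Matrix (Fin m) (Fin m) K) (Q : Matrix (Fin n) (Fin n) K),
          P.det = 1 → Q.det = 1 → slPairAction K m n P Q f = f} =
      Set.range (MvPolynomial.C : K → MvPolynomial (Fin m × Fin n × Fin 2) K) := by
  obtain ⟨d, hd₁, hd₂⟩ := exists_degree_bounds hmn hne
  ext f
  refine ⟨fun hf => ⟨eval 0 f, MvPolynomial.funext fun x => ?_⟩, ?_⟩
  · let Z : Fin 2 → Matrix (Fin m) (Fin n) K := fun k => of fun i j => x (i, j, k)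
    obtain ⟨T, U, hX, hY, hdim⟩ := exists_subspace_finrank_lt hd₁ hd₂ (Z 0) (Z 1)
    have hx : pencilPoint Z = x := rfl
    simpa [hx] using (IsSLPairInvariant.eval_eq_eval_zero_of_subspace hf Z T U
      (Fin.forall_fin_two.2 ⟨hX, hY⟩) hdim).symm
  · rintro ⟨c, rfl⟩ P Q _ _
    exact (slPairAction K m n P Q).commutes c
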